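/- For any non-negative integer t and any graph G, every rank-t perturbation of G is a t-perturbation of G. -/

import Mathlib

/-!
Over `GF(2)` a nonzero symmetric matrix `M` loses rank by a rank-one Wedderburn reduction: if
some `M x x = 1`, adding `c cᵀ` (with `c` the `x`-th column) lowers the rank by one; if the
diagonal vanishes and `M x y = 1`, two successive reductions add `a bᵀ + b aᵀ` (with `a`, `b` the
`x`-th and `y`-th columns) and lower it by two. Each such term is realised by a gadget: a new
vertex adjacent to the support of `c`, local complementation at which toggles the pattern `c cᵀ`
on `V`; or two adjacent new vertices seeing the supports of `b` and `a`, pivoting on which toggles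
`a bᵀ + b aᵀ`. Peeling off the terms one at a time, keeping `G` induced on `V`, builds a graph on
`|V| + t` vertices that has `G` as an induced subgraph and `G'` as a vertex-minor.
-/

namespace EP

variable {V W : Type}

/-- Local complementation of `G` at `v`: complement the adjacency between
every pair of distinct neighbours of `v`. -/
def localComp (G : SimpleGraph V) (v : V) : SimpleGraph V where
  Adj x y := x ≠ y ∧
    ((G.Adj v x ∧ G.Adj v y ∧ ¬ G.Adj x y) ∨ (¬(G.Adj v x ∧ G.Adj v y) ∧ G.Adj x y))
  symm := by
    constructor
    intro x y h
    obtain ⟨hxy, h⟩ := h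
    refine ⟨hxy.symm, ?_⟩
    rcases h with ⟨h1, h2, h3⟩ | ⟨h1, h2⟩
    · exact Or.inl ⟨h2, h1, fun h => h3 h.symm⟩
    · exact Or.inr ⟨fun h => h1 ⟨h.2, h.1⟩, h2.symm⟩
  loopless := ⟨fun x h => h.1 rfl⟩

/-- Two graphs on the same vertex set are locally equivalent if one is obtained from
the other by a sequence of local complementations. -/
def LocEquiv (G G' : SimpleGraph V) : Prop :=
  Relation.ReflTransGen (fun A B => ∃ v, B = localComp A v) G G'

/-- `H` is a vertex-minor of `G`, located at the embedding `f`: some graph locally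
equivalent to `G` induces a copy of `H` on the image of `f` (equivalently, `H` is
obtained from `G` by a sequence of local complementations and vertex deletions,
with `f` recording the surviving vertices). -/
def IsVertexMinorAt (G : SimpleGraph V) (H : SimpleGraph W) (f : W ↪ V) : Prop :=
  ∃ G' : SimpleGraph V, LocEquiv G G' ∧ ∀ x y, H.Adj x y ↔ G'.Adj (f x) (f y)

/-- `G` has a vertex-minor isomorphic to `H`. -/
def HasVertexMinor (G : SimpleGraph V) (H : SimpleGraph W) : Prop :=
  ∃ f : W ↪ V, IsVertexMinorAt G H f

/-- `G₁` is a `t`-perturbation of `G₂`: they have the same vertex set `V`, and some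
graph on `|V| + t` vertices contains both of them as vertex-minors (on `V`). -/
def IsPerturbation (t : ℕ) (G₁ G₂ : SimpleGraph V) : Prop :=
  ∃ Gbig : SimpleGraph (V ⊕ Fin t),
    IsVertexMinorAt Gbig G₁ ⟨Sum.inl, Sum.inl_injective⟩ ∧
    IsVertexMinorAt Gbig G₂ ⟨Sum.inl, Sum.inl_injective⟩

/-- The disjoint union of `k` copies of `H`. -/
def copies (k : ℕ) (H : SimpleGraph W) : SimpleGraph (Fin k × W) where
  Adj x y := x.1 = y.1 ∧ H.Adj x.2 y.2
  symm := ⟨fun _ _ h => ⟨h.1.symm, h.2.symm⟩⟩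
  loopless := ⟨fun x h => H.irrefl h.2⟩

/-- `G` is a circle graph: its vertices can be assigned chords of a circle
(encoded by pairs of distinct endpoints, all `2|V|` endpoints being distinct) so that
two distinct vertices are adjacent iff their chords cross, i.e. exactly one endpoint
of one chord lies strictly between the two endpoints of the other. -/
def IsCircleGraph (G : SimpleGraph V) : Prop :=
  ∃ a b : V → ℝ,
    (∀ u v, a u = a v → u = v) ∧ (∀ u v, b u = b v → u = v) ∧ (∀ u v, a u ≠ b v) ∧
    ∀ u v, G.Adj u v ↔ u ≠ v ∧
      ¬((min (a u) (b u) < a v ∧ a v < max (a u) (b u)) ↔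
        (min (a u) (b u) < b v ∧ b v < max (a u) (b u)))

/-- `G` is `t`-robust for `H` if every `t`-perturbation of `G` has a vertex-minor
isomorphic to `H`. -/
def Robust (t : ℕ) (G : SimpleGraph V) (H : SimpleGraph W) : Prop :=
  ∀ G' : SimpleGraph V, IsPerturbation t G' G → HasVertexMinor G' H

open Classical in
/-- The cut-rank of `X` in `G`: the rank over `GF(2)` of the `X × Xᶜ` submatrix of the
adjacency matrix of `G`. -/
noncomputable def cutRank [Fintype V] (G : SimpleGraph V) (X : Set V) : ℕ :=
  (Matrix.of fun (x : X) (y : ↥Xᶜ) => if G.Adj x.1 y.1 then (1 : ZMod 2) else 0).rank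

/-- The graph obtained from `G` by deleting all edges with exactly one end in `X`. -/
def cutDelete (G : SimpleGraph V) (X : Set V) : SimpleGraph V where
  Adj x y := G.Adj x y ∧ (x ∈ X ↔ y ∈ X)
  symm := ⟨fun _ _ h => ⟨h.1.symm, h.2.symm⟩⟩
  loopless := ⟨fun x h => G.irrefl h.1⟩

open Classical in
/-- The adjacency matrix of `G` over `GF(2)`. -/
noncomputable def adjMat (G : SimpleGraph V) : Matrix V V (ZMod 2) :=
  Matrix.of fun x y => if G.Adj x y then 1 else 0

/-- `G₁` is a rank-`t` perturbation of `G₂`: the adjacency matrix of `G₁` is obtained from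
that of `G₂` by adding a matrix of rank at most `t` over `GF(2)` and then zeroing out the
diagonal. -/
def IsRankPerturbation [Fintype V] (t : ℕ) (G₁ G₂ : SimpleGraph V) : Prop :=
  ∃ M : Matrix V V (ZMod 2), M.rank ≤ t ∧
    ∀ x y : V, x ≠ y → adjMat G₁ x y = adjMat G₂ x y + M x y

section AdjMat

variable {U U' : Type}

lemma adjMat_apply (G : SimpleGraph U) (x y : U) [Decidable (G.Adj x y)] :
    adjMat G x y = if G.Adj x y then 1 else 0 := by
  simp only [adjMat, Matrix.of_apply]; congr

lemma adjMat_eq_one_iff {G : SimpleGraph U} {x y : U} : adjMat G x y = 1 ↔ G.Adj x y := by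
  classical
  by_cases h : G.Adj x y <;> simp [adjMat_apply, h]

lemma adjMat_self (G : SimpleGraph U) (x : U) : adjMat G x x = 0 := by
  classical
  simp [adjMat_apply]

lemma adjMat_comm (G : SimpleGraph U) (x y : U) : adjMat G x y = adjMat G y x := by
  classical
  simp [adjMat_apply, G.adj_comm]

lemma adjMat_comap (G : SimpleGraph U') (f : U → U') (x y : U) :
    adjMat (G.comap f) x y = adjMat G (f x) (f y) := by
  classical
  simp [adjMat_apply]

lemma eq_of_adjMat_eq {G G' : SimpleGraph U} (h : ∀ x y, x ≠ y → adjMat G x y = adjMat G' x y) :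
    G = G' := by
  ext x y
  rcases eq_or_ne x y with rfl | hxy
  · simp
  · rw [← adjMat_eq_one_iff, ← adjMat_eq_one_iff, h x y hxy]

lemma exists_adjMat_eq_add (G : SimpleGraph U) (N : Matrix U U (ZMod 2)) (hN : N.IsSymm) :
    ∃ G' : SimpleGraph U, ∀ x y, x ≠ y → adjMat G' x y = adjMat G x y + N x y := by
  classical
  refine ⟨SimpleGraph.fromRel fun x y => adjMat G x y + N x y = 1, fun x y hxy => ?_⟩
  rw [adjMat_apply]
  simp only [SimpleGraph.fromRel_adj, ne_eq, hxy, not_false_eq_true, true_and,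
    adjMat_comm G y x, hN.apply x y, or_self]
  generalize adjMat G x y + N x y = z
  revert z; decide

lemma adjMat_localComp (G : SimpleGraph U) (v : U) {x y : U} (hxy : x ≠ y) :
    adjMat (localComp G v) x y = adjMat G x y + adjMat G v x * adjMat G v y := by
  classical
  simp only [adjMat_apply, localComp, ne_eq, hxy, not_false_eq_true, true_and]
  by_cases hx : G.Adj v x <;> by_cases hy : G.Adj v y <;> by_cases h : G.Adj x y <;>
    simp [hx, hy, h, show (1 : ZMod 2) + 1 = 0 from rfl]

lemma adjMat_localComp_left (G : SimpleGraph U) (v x : U) :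
    adjMat (localComp G v) v x = adjMat G v x := by
  rcases eq_or_ne v x with rfl | hvx
  · simp only [adjMat_self]
  · simp [adjMat_localComp _ _ hvx, adjMat_self]

lemma localComp_localComp (G : SimpleGraph U) (v : U) : localComp (localComp G v) v = G := by
  refine eq_of_adjMat_eq fun x y hxy => ?_
  rw [adjMat_localComp _ _ hxy, adjMat_localComp _ _ hxy, adjMat_localComp_left,
    adjMat_localComp_left, add_assoc, CharTwo.add_self_eq_zero, add_zero]

lemma adjMat_pivot (G : SimpleGraph U) {p q : U} (hpq : G.Adj p q) {x y : U} (hxy : x ≠ y)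
    (hxp : x ≠ p) (hxq : x ≠ q) (hyp : y ≠ p) (hyq : y ≠ q) :
    adjMat (localComp (localComp (localComp G p) q) p) x y =
      adjMat G x y + (adjMat G p x * adjMat G q y + adjMat G q x * adjMat G p y) := by
  have hq : ∀ z, z ≠ q → adjMat (localComp G p) q z = adjMat G q z + adjMat G p z := by
    intro z hz
    rw [adjMat_localComp _ _ hz.symm, adjMat_comm G p q, adjMat_eq_one_iff.mpr hpq.symm, one_mul]
  have hp : ∀ z, z ≠ p → z ≠ q → adjMat (localComp (localComp G p) q) p z = adjMat G q z := by
    intro z hzp hzq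
    rw [adjMat_localComp _ _ hzp.symm, adjMat_localComp_left, adjMat_comm _ q p,
      adjMat_localComp_left, adjMat_eq_one_iff.mpr hpq, one_mul, hq z hzq]
    ring_nf
    reduce_mod_char
  rw [adjMat_localComp _ _ hxy, adjMat_localComp _ _ hxy, adjMat_localComp _ _ hxy, hp x hxp hxq,
    hp y hyp hyq, hq x hxq, hq y hyq]
  ring_nf
  reduce_mod_char

end AdjMat

section VertexMinor

variable {U U' U'' : Type}

lemma comap_localComp {f : U → U'} (hf : Function.Injective f) (G : SimpleGraph U') (v : U) :
    (localComp G (f v)).comap f = localComp (G.comap f) v :=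
  eq_of_adjMat_eq fun x y hxy => by
    simp only [adjMat_comap, adjMat_localComp _ _ hxy, adjMat_localComp _ _ (hf.ne hxy)]

lemma LocEquiv.exists_comap_eq {f : U → U'} (hf : Function.Injective f) {G : SimpleGraph U'}
    {H : SimpleGraph U} (h : LocEquiv (G.comap f) H) :
    ∃ G' : SimpleGraph U', LocEquiv G G' ∧ G'.comap f = H := by
  induction h with
  | refl => exact ⟨G, .refl, rfl⟩
  | tail _ hstep ih =>
    obtain ⟨G', hGG', rfl⟩ := ih
    obtain ⟨v, rfl⟩ := hstep
    exact ⟨localComp G' (f v), hGG'.tail ⟨f v, rfl⟩, comap_localComp hf G' v⟩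

lemma isVertexMinorAt_iff {G : SimpleGraph U'} {H : SimpleGraph U} {f : U ↪ U'} :
    IsVertexMinorAt G H f ↔ ∃ G' : SimpleGraph U', LocEquiv G G' ∧ G'.comap f = H := by
  simp only [IsVertexMinorAt, SimpleGraph.ext_iff, funext_iff, SimpleGraph.comap_adj, eq_iff_iff,
    iff_comm]

lemma IsVertexMinorAt.trans {G : SimpleGraph U''} {H : SimpleGraph U'} {K : SimpleGraph U}
    {f : U' ↪ U''} {g : U ↪ U'} (hGH : IsVertexMinorAt G H f) (hHK : IsVertexMinorAt H K g) :
    IsVertexMinorAt G K (g.trans f) := by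
  rw [isVertexMinorAt_iff] at *
  obtain ⟨G₁, hGG₁, rfl⟩ := hGH
  obtain ⟨H₁, hHH₁, rfl⟩ := hHK
  obtain ⟨G₂, hG₁G₂, rfl⟩ := hHH₁.exists_comap_eq f.injective
  exact ⟨G₂, hGG₁.trans hG₁G₂, rfl⟩

end VertexMinor

end EP

namespace Matrix

lemma sub_eq_add_of_zmod_two {m n : Type} (A B : Matrix m n (ZMod 2)) : A - B = A + B :=
  ext fun _ _ => CharTwo.sub_eq_add _ _

variable {K m n : Type} [Field K] [Fintype n]

lemma rank_lt_rank_of_ker_lt {A B : Matrix m n K}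
    (h : LinearMap.ker A.mulVecLin < LinearMap.ker B.mulVecLin) : B.rank < A.rank := by
  have := Submodule.finrank_lt_finrank_of_lt h
  have := LinearMap.finrank_range_add_finrank_ker A.mulVecLin
  have := LinearMap.finrank_range_add_finrank_ker B.mulVecLin
  unfold Matrix.rank
  omega

lemma rank_sub_vecMulVec_lt [DecidableEq n] (M : Matrix m n K) {i : m} {j : n} (h : M i j ≠ 0) :
    (M - (M i j)⁻¹ • vecMulVec (M.col j) (M.row i)).rank < M.rank := by
  refine rank_lt_rank_of_ker_lt (SetLike.lt_iff_le_and_exists.mpr ⟨fun v hv => ?_,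
    Pi.single j 1, ?_, fun hj => h ?_⟩)
  · have hv : M *ᵥ v = 0 := hv
    have hiv : M.row i ⬝ᵥ v = 0 := congrFun hv i
    simp [vecMulVec_mulVec, hiv, hv]
  · ext k
    simp [vecMulVec_apply, mul_left_comm _ (M k j), inv_mul_cancel₀ h]
  · simpa using congrFun (show M *ᵥ Pi.single j 1 = 0 from hj) i

variable {U : Type} [Fintype U] [DecidableEq U]

lemma rank_add_vecMulVec_self_lt {M : Matrix U U (ZMod 2)} (hM : M.IsSymm) {x : U}
    (hx : M x x = 1) : (M + vecMulVec (M x) (M x)).rank < M.rank := by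
  have h := M.rank_sub_vecMulVec_lt (i := x) (j := x) (by simp [hx])
  have hcol : M.col x = M x := funext fun k => hM.apply x k
  rwa [hcol, hx, inv_one, one_smul, sub_eq_add_of_zmod_two] at h

lemma rank_add_vecMulVec_add_vecMulVec_lt {M : Matrix U U (ZMod 2)} (hM : M.IsSymm)
    (hdiag : ∀ z, M z z = 0) {x y : U} (hxy : M x y = 1) :
    (M + vecMulVec (M x) (M y) + vecMulVec (M y) (M x)).rank + 1 < M.rank := by
  set M₁ := M + vecMulVec (M x) (M y)
  have h₁ : M₁.rank < M.rank := by
    have h := M.rank_sub_vecMulVec_lt (i := y) (j := x) (by simp [hM.apply, hxy])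
    have hcol : M.col x = M x := funext fun k => hM.apply x k
    rwa [hcol, hM.apply, hxy, inv_one, one_smul, sub_eq_add_of_zmod_two] at h
  have h₂ : (M₁ + vecMulVec (M y) (M x)).rank < M₁.rank := by
    have hM₁ : M₁ x y = 1 := by simp [M₁, vecMulVec_apply, hdiag, hxy]
    have h := M₁.rank_sub_vecMulVec_lt (i := x) (j := y) (by simp [hM₁])
    have hcol : M₁.col y = M y := funext fun k => by
      simp [M₁, vecMulVec_apply, hdiag, hM.apply y k]
    have hrow : M₁.row x = M x := funext fun k => by simp [M₁, vecMulVec_apply, hdiag]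
    rwa [hcol, hrow, hM₁, inv_one, one_smul, sub_eq_add_of_zmod_two] at h
  omega

lemma exists_rank_add_vecMulVec_lt {M : Matrix U U (ZMod 2)} (hM : M.IsSymm) (h0 : M ≠ 0) :
    (∃ c, (M + vecMulVec c c).rank < M.rank) ∨
      ∃ a b, (M + vecMulVec a b + vecMulVec b a).rank + 1 < M.rank := by
  have eq_one : ∀ {z : ZMod 2}, z ≠ 0 → z = 1 := by decide
  by_cases hdiag : ∃ x, M x x = 1
  · obtain ⟨x, hx⟩ := hdiag
    exact .inl ⟨M x, rank_add_vecMulVec_self_lt hM hx⟩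
  · simp only [not_exists] at hdiag
    obtain ⟨x, y, hxy⟩ : ∃ x y, M x y ≠ 0 := by
      by_contra! h
      exact h0 (Matrix.ext h)
    exact .inr ⟨M x, M y, rank_add_vecMulVec_add_vecMulVec_lt hM
      (fun z => by_contra fun hz => hdiag z (eq_one hz))
      (eq_one hxy)⟩

end Matrix

namespace EP

lemma exists_comap_eq_and_adjMat_eq {U U' : Type} {ι : U → U'} (hι : Function.Injective ι)
    {p : U'} (hp : p ∉ Set.range ι) (H : SimpleGraph U) (c : U → ZMod 2) :
    ∃ K : SimpleGraph U', K.comap ι = H ∧ ∀ u, adjMat K p (ι u) = c u := by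
  classical
  have hp' : ∀ u, p ≠ ι u := fun u h => hp ⟨u, h.symm⟩
  refine ⟨SimpleGraph.fromRel fun a b =>
    (∃ u w, a = ι u ∧ b = ι w ∧ H.Adj u w) ∨ (a = p ∧ ∃ u, b = ι u ∧ c u = 1), ?_, fun u => ?_⟩
  · ext u w
    simp only [SimpleGraph.comap_adj, SimpleGraph.fromRel_adj, hι.eq_iff, (hp' _).symm,
      false_and, or_false]
    constructor
    · rintro ⟨-, ⟨_, _, rfl, rfl, h⟩ | ⟨_, _, rfl, rfl, h⟩⟩
      exacts [h, h.symm]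
    · intro h
      exact ⟨hι.ne h.ne, .inl ⟨u, w, rfl, rfl, h⟩⟩
  · rw [adjMat_apply]
    simp only [SimpleGraph.fromRel_adj, hp', (hp' _).symm, hι.eq_iff, false_and, and_false,
      exists_false, true_and, exists_eq_left', false_or, or_false, ne_eq, not_false_eq_true]
    generalize c u = z
    revert z; decide

section InducedPerturbation

variable {V : Type}

/-- A `t`-perturbation in which `G₂` is not merely a vertex-minor of the big graph but its
induced subgraph on `V`. -/
def IsInducedPerturbation (t : ℕ) (G₁ G₂ : SimpleGraph V) : Prop :=
  ∃ H : SimpleGraph (V ⊕ Fin t), H.comap Sum.inl = G₂ ∧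
    IsVertexMinorAt H G₁ ⟨Sum.inl, Sum.inl_injective⟩

lemma IsInducedPerturbation.isPerturbation {t : ℕ} {G₁ G₂ : SimpleGraph V}
    (h : IsInducedPerturbation t G₁ G₂) : IsPerturbation t G₁ G₂ := by
  obtain ⟨H, rfl, hH⟩ := h
  exact ⟨H, hH, isVertexMinorAt_iff.mpr ⟨H, .refl, rfl⟩⟩

lemma isInducedPerturbation_refl (t : ℕ) (G : SimpleGraph V) : IsInducedPerturbation t G G :=
  ⟨G.map (⟨Sum.inl, Sum.inl_injective⟩ : V ↪ V ⊕ Fin t), SimpleGraph.comap_map_eq _ _,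
    isVertexMinorAt_iff.mpr ⟨_, .refl, SimpleGraph.comap_map_eq _ _⟩⟩

lemma inr_last_notMem_range (s : ℕ) :
    (.inr (Fin.last s) : V ⊕ Fin (s + 1)) ∉ Set.range (Sum.map id Fin.castSucc) := by
  rintro ⟨u | i, h⟩
  · simp at h
  · simpa using (Fin.castSucc_lt_last i).ne (Sum.inr_injective h)

lemma IsInducedPerturbation.of_clique {s : ℕ} {G G₁ G' : SimpleGraph V} (c : V → ZMod 2)
    (hG₁ : ∀ x y, x ≠ y → adjMat G₁ x y = adjMat G x y + c x * c y)
    (h : IsInducedPerturbation s G' G₁) : IsInducedPerturbation (s + 1) G' G := by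
  obtain ⟨H₀, hH₀, hmin⟩ := h
  let ι : V ⊕ Fin s ↪ V ⊕ Fin (s + 1) := (Function.Embedding.refl V).sumMap Fin.castSuccEmb
  let p : V ⊕ Fin (s + 1) := .inr (Fin.last s)
  obtain ⟨K, hK, hKp⟩ :=
    exists_comap_eq_and_adjMat_eq ι.injective (inr_last_notMem_range s) H₀ (Sum.elim c 0)
  refine ⟨localComp K p, eq_of_adjMat_eq fun x y hxy => ?_, ?_⟩
  · have hKx : ∀ x, adjMat K p (.inl x) = c x := fun x => hKp (.inl x)
    calc adjMat ((localComp K p).comap Sum.inl) x y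
        = adjMat G₁ x y + c x * c y := by
          rw [adjMat_comap, adjMat_localComp _ _ (Sum.inl_injective.ne hxy), hKx, hKx, ← hH₀,
            ← hK, adjMat_comap, adjMat_comap]
          rfl
      _ = adjMat G x y := by
          rw [hG₁ x y hxy, add_assoc, CharTwo.add_self_eq_zero, add_zero]
  · have hK₀ : IsVertexMinorAt (localComp K p) H₀ ι :=
      isVertexMinorAt_iff.mpr ⟨K, .single ⟨p, (localComp_localComp K p).symm⟩, hK⟩
    exact hK₀.trans hmin

lemma IsInducedPerturbation.of_pivot {s : ℕ} {G G₁ G' : SimpleGraph V} (a b : V → ZMod 2)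
    (hG₁ : ∀ x y, x ≠ y → adjMat G₁ x y = adjMat G x y + (a x * b y + b x * a y))
    (h : IsInducedPerturbation s G' G₁) : IsInducedPerturbation (s + 2) G' G := by
  obtain ⟨H₀, hH₀, hmin⟩ := h
  let ι₀ : V ⊕ Fin s ↪ V ⊕ Fin (s + 1) := (Function.Embedding.refl V).sumMap Fin.castSuccEmb
  let ι₁ : V ⊕ Fin (s + 1) ↪ V ⊕ Fin (s + 2) := (Function.Embedding.refl V).sumMap Fin.castSuccEmb
  let q₀ : V ⊕ Fin (s + 1) := .inr (Fin.last s)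
  let p : V ⊕ Fin (s + 2) := .inr (Fin.last (s + 1))
  let q : V ⊕ Fin (s + 2) := ι₁ q₀
  -- `q` sees the support of `a` in `V`; `p` sees `q` and the support of `b`.
  obtain ⟨K₁, hK₁, hK₁q⟩ :=
    exists_comap_eq_and_adjMat_eq ι₀.injective (inr_last_notMem_range s) H₀ (Sum.elim a 0)
  obtain ⟨K, hK, hKp⟩ := exists_comap_eq_and_adjMat_eq ι₁.injective
    (inr_last_notMem_range (s + 1)) K₁ (Sum.elim b (Pi.single (Fin.last s) 1))
  have hpq : K.Adj p q := adjMat_eq_one_iff.mp ((hKp q₀).trans (by simp [q₀]))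
  have hKpx : ∀ x, adjMat K p (.inl x) = b x := fun x => hKp (.inl x)
  have hKqx : ∀ x, adjMat K q (.inl x) = a x := fun x => by
    change adjMat K (ι₁ q₀) (ι₁ (ι₀ (.inl x))) = a x
    rw [← adjMat_comap, hK]
    exact hK₁q (.inl x)
  have hKxy : ∀ x y, adjMat K (.inl x) (.inl y) = adjMat G₁ x y := fun x y => by
    change adjMat K (ι₁ (ι₀ (.inl x))) (ι₁ (ι₀ (.inl y))) = _
    rw [← adjMat_comap, hK, ← adjMat_comap, hK₁, ← hH₀, adjMat_comap]
  refine ⟨localComp (localComp (localComp K p) q) p, eq_of_adjMat_eq fun x y hxy => ?_, ?_⟩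
  · calc adjMat ((localComp (localComp (localComp K p) q) p).comap Sum.inl) x y
        = adjMat G₁ x y + (b x * a y + a x * b y) := by
          rw [adjMat_comap, adjMat_pivot K hpq (Sum.inl_injective.ne hxy) Sum.inl_ne_inr
            Sum.inl_ne_inr Sum.inl_ne_inr Sum.inl_ne_inr, hKpx, hKpx, hKqx, hKqx, hKxy]
      _ = adjMat G x y := by
          rw [hG₁ x y hxy]
          ring_nf
          reduce_mod_char
  · have hK₀ : IsVertexMinorAt (localComp (localComp (localComp K p) q) p) H₀ (ι₀.trans ι₁) := by
      refine isVertexMinorAt_iff.mpr ⟨K, .tail (.tail (.single ⟨p, rfl⟩) ⟨q, rfl⟩) ⟨p, ?_⟩, ?_⟩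
      · simp only [localComp_localComp]
      · rw [Function.Embedding.coe_trans, ← SimpleGraph.comap_comap, hK, hK₁]
    exact hK₀.trans hmin

end InducedPerturbation

open Matrix in
lemma isInducedPerturbation_of_rank_le {V : Type} [Fintype V] [DecidableEq V] (t : ℕ)
    {M : Matrix V V (ZMod 2)} (hM : M.IsSymm) (hrk : M.rank ≤ t) {G G' : SimpleGraph V}
    (hG' : ∀ x y, x ≠ y → adjMat G' x y = adjMat G x y + M x y) :
    IsInducedPerturbation t G' G := by
  induction t using Nat.strong_induction_on generalizing M G with
  | _ t ih =>
    by_cases h0 : M = 0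
    · subst h0
      obtain rfl : G' = G := eq_of_adjMat_eq fun x y hxy => by simpa using hG' x y hxy
      exact isInducedPerturbation_refl t G'
    rcases exists_rank_add_vecMulVec_lt hM h0 with ⟨c, hc⟩ | ⟨a, b, hab⟩
    · obtain ⟨s, rfl⟩ : ∃ s, t = s + 1 := ⟨t - 1, by omega⟩
      have hN : (vecMulVec c c).IsSymm := transpose_vecMulVec c c
      obtain ⟨G₁, hG₁⟩ := exists_adjMat_eq_add G _ hN
      refine .of_clique c hG₁ (ih s (by omega) (hM.add hN) (by omega) fun x y hxy => ?_)
      rw [hG' x y hxy, hG₁ x y hxy, Matrix.add_apply, vecMulVec_apply]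
      ring_nf
      reduce_mod_char
    · obtain ⟨s, rfl⟩ : ∃ s, t = s + 2 := ⟨t - 2, by omega⟩
      have hN : (vecMulVec a b + vecMulVec b a).IsSymm := by
        simp only [IsSymm, transpose_add, transpose_vecMulVec, add_comm]
      obtain ⟨G₁, hG₁⟩ := exists_adjMat_eq_add G _ hN
      refine .of_pivot a b hG₁ (ih s (by omega) (hM.add hN)
        (by rw [← add_assoc]; omega) fun x y hxy => ?_)
      simp only [hG' x y hxy, hG₁ x y hxy, Matrix.add_apply, vecMulVec_apply]
      ring_nf
      reduce_mod_char

lemma isSymm_of_adjMat_eq_add {V : Type} {G G' : SimpleGraph V} {M : Matrix V V (ZMod 2)}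
    (h : ∀ x y, x ≠ y → adjMat G' x y = adjMat G x y + M x y) : M.IsSymm := by
  refine Matrix.IsSymm.ext fun x y => ?_
  rcases eq_or_ne x y with rfl | hxy
  · rfl
  · rw [eq_sub_of_add_eq' (h x y hxy).symm, eq_sub_of_add_eq' (h y x hxy.symm).symm,
      adjMat_comm G', adjMat_comm G]

/-- Every rank-`t` perturbation of a graph `G` is a `t`-perturbation
of `G`. -/
theorem rankPerturbation_isPerturbation {V : Type} [Fintype V] (t : ℕ)
    (G G' : SimpleGraph V) (h : IsRankPerturbation t G' G) :
    IsPerturbation t G' G := by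
  classical
  obtain ⟨M, hrk, hM⟩ := h
  exact (isInducedPerturbation_of_rank_le t (isSymm_of_adjMat_eq_add hM) hrk hM).isPerturbation

end EP
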